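/- arXiv:2402.13381 — 2 statements merged into one kernel-verified Lean document; each statement's English description precedes it below -/
import Mathlib

section
/- Let T₁ ∈ F^{M×N} and T₂ ∈ F^{N×P}, with M = Σ_{i∈V} m_i, N = Σ_{i∈V} n_i, and P = Σ_{i∈V} p_i, be TSS matrices on the same finite connected acyclic undirected graph G = (V,E) with rank profiles ρ₁ and ρ₂ respectively (the column block partition of T₁ agreeing with the row block partition of T₂). Then T₃ = T₁T₂ admits a TSS representation on G with rank profile e ↦ ρ₁(e) + ρ₂(e). -/
/-!
Block `(i,j)` of `T₁T₂` is `∑ₗ T₁⟨i,l⟩ T₂⟨l,j⟩`. Cut the first edge `(j,c)` of the path from `j`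
to `i`. For `l` on the side of `j`, `T₁⟨i,l⟩` is a Hankel block of `T₁` across `(j,c)` and
factors as (generators of `T₁` along `c ⋯ i`) · `ctrl₁(l)`; for `l` on the side of `c`, `T₂⟨l,j⟩`
factors as `obs₂(l) · Inp₂`. So the product is realised on the pair of states, with
`Inp = [ctrlMul; Inp₂]`, `Out = [Out₁, mulObs]` and block upper triangular transitions
`[[Trans₁, ctrlObs], [0, Trans₂]]`; the coupling `ctrlObs` at a vertex `b` accounts for the
vertices hanging off `b` away from the path.
-/

open Matrix

attribute [local instance] Classical.propDecidable

namespace TSS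

variable {F : Type*} [Field F] {V : Type*} [Fintype V] [DecidableEq V]

/-- The `(i,j)` block of a graph-partitioned matrix. -/
def blockOf {m n : V → ℕ} (T : Matrix ((i : V) × Fin (m i)) ((j : V) × Fin (n j)) F)
    (i j : V) : Matrix (Fin (m i)) (Fin (n j)) F :=
  fun a b => T ⟨i, a⟩ ⟨j, b⟩

/-- The submatrix `T⟨A,B⟩` of a graph-partitioned matrix. -/
def subBlock {m n : V → ℕ} (T : Matrix ((i : V) × Fin (m i)) ((j : V) × Fin (n j)) F)
    (A B : Set V) :
    Matrix {p : (i : V) × Fin (m i) // p.1 ∈ A} {q : (j : V) × Fin (n j) // q.1 ∈ B} F :=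
  T.submatrix (fun p => p.1) (fun q => q.1)

/-- The Hankel block `T⟨Ā,A⟩` induced by `A`. -/
def hankelBlock {m n : V → ℕ} (T : Matrix ((i : V) × Fin (m i)) ((j : V) × Fin (n j)) F)
    (A : Set V) :
    Matrix {p : (i : V) × Fin (m i) // p.1 ∈ Aᶜ} {q : (j : V) × Fin (n j) // q.1 ∈ A} F :=
  subBlock T Aᶜ A

/-- The number of border edges of `A`: edges of `G` with one endpoint in `A` and the other
outside of `A` (each such undirected edge is counted once, via its orientation out of `A`). -/
noncomputable def edgeCount (G : SimpleGraph V) (A : Set V) : ℕ :=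
  Nat.card {e : V × V // e.1 ∈ A ∧ e.2 ∉ A ∧ G.Adj e.1 e.2}

/-- The vertex set of the connected component containing `i` after deleting the edge `{i,j}`. -/
def side (G : SimpleGraph V) (i j : V) : Set V :=
  {v | (G.deleteEdges {s(i, j)}).Reachable i v}

/-- The unit Hankel block associated with the directed edge `(i,j)`. -/
def unitHankel (G : SimpleGraph V) {m n : V → ℕ}
    (T : Matrix ((i : V) × Fin (m i)) ((j : V) × Fin (n j)) F) (i j : V) :=
  hankelBlock T (side G i j)

/-- `outChain Out Trans k i w j` is the product
`Out^i_{p_{ν−1}} · Trans^{p_{ν−1}}_{i,p_{ν−2}} ⋯ Trans^{k}_{p₁,j}` along the walk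
`w : k = p₀ − p₁ − ⋯ − p_ν = i`, with incoming edge `(j,k)`. -/
noncomputable def outChain {G : SimpleGraph V} {m : V → ℕ} {ρ : V → V → ℕ}
    (Out : ∀ k i : V, Matrix (Fin (m k)) (Fin (ρ i k)) F)
    (Trans : ∀ k i j : V, Matrix (Fin (ρ k i)) (Fin (ρ j k)) F) :
    ∀ (k i : V), G.Walk k i → ∀ j : V, Matrix (Fin (m i)) (Fin (ρ j k)) F
  | k, _, .nil, j => Out k j
  | k, _, .cons (v := k') _ w, j => outChain Out Trans k' _ w k * Trans k k' j

/-- `pathMatrix Inp Trans Out j i w` is the product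
`Out^i_{p_{ν−1}} · Trans^{p_{ν−1}}_{i,p_{ν−2}} ⋯ Trans^{p₁}_{p₂,j} · Inp^j_{p₁}` along the
walk `w : j = p₀ − p₁ − ⋯ − p_ν = i` (and junk `0` for the empty walk). -/
noncomputable def pathMatrix {G : SimpleGraph V} {m n : V → ℕ} {ρ : V → V → ℕ}
    (Inp : ∀ k j : V, Matrix (Fin (ρ k j)) (Fin (n k)) F)
    (Trans : ∀ k i j : V, Matrix (Fin (ρ k i)) (Fin (ρ j k)) F)
    (Out : ∀ k i : V, Matrix (Fin (m k)) (Fin (ρ i k)) F) :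
    ∀ (j i : V), G.Walk j i → Matrix (Fin (m i)) (Fin (n j)) F
  | _, _, .nil => 0
  | j, i, .cons (v := p1) _ w => outChain Out Trans p1 i w j * Inp j p1

/-- A TSS representation of the graph-partitioned matrix `T` on the tree `G`, with
output dimensions `m`, input dimensions `n` and rank profile `ρ` (only the values of the
generators and of `ρ` on (pairs of adjoining) directed edges of `G` are relevant). -/
structure TSSRepr (G : SimpleGraph V) (m n : V → ℕ) (ρ : V → V → ℕ)
    (T : Matrix ((i : V) × Fin (m i)) ((j : V) × Fin (n j)) F) where
  D : ∀ k : V, Matrix (Fin (m k)) (Fin (n k)) F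
  Inp : ∀ k j : V, Matrix (Fin (ρ k j)) (Fin (n k)) F
  Trans : ∀ k i j : V, Matrix (Fin (ρ k i)) (Fin (ρ j k)) F
  Out : ∀ k i : V, Matrix (Fin (m k)) (Fin (ρ i k)) F
  diag : ∀ i : V, blockOf T i i = D i
  offdiag : ∀ {i j : V}, i ≠ j → ∀ w : G.Walk j i, w.IsPath →
      blockOf T i j = pathMatrix Inp Trans Out j i w


open SimpleGraph Walk

section Chains

variable {F : Type*} [Field F] {V : Type*} {G : SimpleGraph V}

/-- `transChain Trans k b w c j` is the product `Trans^b_{c,·} ⋯ Trans^k_{·,j}` of the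
transition matrices along the walk `w : k − ⋯ − b`, entered through the edge `(j,k)` and left
through `(b,c)`. -/
noncomputable def transChain {ρ : V → V → ℕ}
    (Trans : ∀ k i j : V, Matrix (Fin (ρ k i)) (Fin (ρ j k)) F) :
    ∀ (k b : V), G.Walk k b → ∀ c j : V, Matrix (Fin (ρ b c)) (Fin (ρ j k)) F
  | k, _, .nil, c, j => Trans k c j
  | k, _, .cons (v := k') _ w, c, j => transChain Trans k' _ w c k * Trans k k' j

/-- `inpChain Inp Trans l b w c` is the product `Trans^b_{c,·} ⋯ Inp^l_{·}` along the walk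
`w : l − ⋯ − b`, left through the edge `(b,c)`. -/
noncomputable def inpChain {n : V → ℕ} {ρ : V → V → ℕ}
    (Inp : ∀ k j : V, Matrix (Fin (ρ k j)) (Fin (n k)) F)
    (Trans : ∀ k i j : V, Matrix (Fin (ρ k i)) (Fin (ρ j k)) F) :
    ∀ (l b : V), G.Walk l b → ∀ c : V, Matrix (Fin (ρ b c)) (Fin (n l)) F
  | l, _, .nil, c => Inp l c
  | l, _, .cons (v := q) _ w, c => transChain Trans q _ w c l * Inp l q

variable {m n : V → ℕ} {ρ : V → V → ℕ}
  (Inp : ∀ k j : V, Matrix (Fin (ρ k j)) (Fin (n k)) F)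
  (Trans : ∀ k i j : V, Matrix (Fin (ρ k i)) (Fin (ρ j k)) F)
  (Out : ∀ k i : V, Matrix (Fin (m k)) (Fin (ρ i k)) F)

lemma outChain_append_cons {k b c i : V} (u : G.Walk k b) (hbc : G.Adj b c) (w : G.Walk c i)
    (j : V) :
    outChain Out Trans k i (u.append (cons hbc w)) j
      = outChain Out Trans c i w b * transChain Trans k b u c j := by
  induction u generalizing j with
  | nil => rfl
  | cons _ u ih =>
    rw [cons_append]
    simp only [outChain, transChain]
    rw [ih, Matrix.mul_assoc]

lemma pathMatrix_append_cons {l b c i : V} (u : G.Walk l b) (hbc : G.Adj b c) (w : G.Walk c i) :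
    pathMatrix Inp Trans Out l i (u.append (cons hbc w))
      = outChain Out Trans c i w b * inpChain Inp Trans l b u c := by
  cases u with
  | nil => rfl
  | cons _ u =>
    rw [cons_append]
    simp only [pathMatrix, inpChain]
    rw [outChain_append_cons, Matrix.mul_assoc]

end Chains

section Tree

variable {V : Type*} {G : SimpleGraph V} {a b c l v : V}

lemma mem_side_iff_exists_walk : v ∈ side G a b ↔ ∃ p : G.Walk a v, s(a, b) ∉ p.edges :=
  reachable_deleteEdges_iff_exists_walk

lemma self_mem_side (a b : V) : a ∈ side G a b :=
  Reachable.refl a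

lemma mem_side_of_notMem_edges {p : G.Walk a v} (hp : s(a, b) ∉ p.edges) {x : V}
    (hx : x ∈ p.support) : x ∈ side G a b :=
  mem_side_iff_exists_walk.2
    ⟨p.takeUntil x hx, fun h => hp (p.edges_takeUntil_subset_edges hx h)⟩

lemma mem_side_of_notMem_support {p : G.Walk a v} (hb : b ∉ p.support) {x : V}
    (hx : x ∈ p.support) : x ∈ side G a b :=
  mem_side_of_notMem_edges (fun h => hb (p.snd_mem_support_of_mem_edges h)) hx

/-- Every edge of an acyclic graph is a bridge. -/
lemma disjoint_side (hG : G.IsAcyclic) (hab : G.Adj a b) : Disjoint (side G a b) (side G b a) :=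
  Set.disjoint_left.2 fun v ha hb =>
    isBridge_iff.1 (isAcyclic_iff_forall_adj_isBridge.1 hG hab)
      (ha.trans (by rw [Sym2.eq_swap]; exact hb.symm))

lemma notMem_side (hG : G.IsAcyclic) (hab : G.Adj a b) : b ∉ side G a b :=
  fun hb => Set.disjoint_left.1 (disjoint_side hG hab) hb (self_mem_side b a)

lemma mem_side_or_mem_side (hG : G.Connected) (a b v : V) : v ∈ side G a b ∨ v ∈ side G b a := by
  set H := G.deleteEdges {s(a, b)}
  suffices h : ∀ {x y : V}, G.Walk x y → H.Reachable a x ∨ H.Reachable b x →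
      H.Reachable a y ∨ H.Reachable b y by
    have := h (hG.preconnected a v).some (Or.inl .rfl)
    rwa [side, side, Sym2.eq_swap (a := b)]
  intro x y w
  induction w with
  | nil => exact id
  | @cons u x y hux w ih =>
    refine fun hu => ih ?_
    by_cases he : s(u, x) = s(a, b)
    · rcases Sym2.eq_iff.1 he with ⟨-, rfl⟩ | ⟨-, rfl⟩
      exacts [Or.inr .rfl, Or.inl .rfl]
    · have hH : H.Adj u x := deleteEdges_adj.2 ⟨hux, he⟩
      exact hu.imp (·.trans hH.reachable) (·.trans hH.reachable)

lemma compl_side (hG : G.IsTree) (hab : G.Adj a b) : (side G a b)ᶜ = side G b a :=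
  Set.ext fun v => ⟨(mem_side_or_mem_side hG.connected a b v).resolve_left,
    fun hv ha => Set.disjoint_left.1 (disjoint_side hG.isAcyclic hab) ha hv⟩

lemma sum_filter_side_add_sum_filter_side {M : Type*} [AddCommMonoid M] (hG : G.IsTree)
    (hab : G.Adj a b) (s : Finset V) (f : V → M) :
    ∑ l ∈ s with l ∈ side G a b, f l + ∑ l ∈ s with l ∈ side G b a, f l = ∑ l ∈ s, f l := by
  simp only [← compl_side hG hab, Set.mem_compl_iff]
  exact Finset.sum_filter_add_sum_filter_not s _ f

lemma mem_side_of_mem_support_of_isPath (hG : G.IsAcyclic) (hl : l ∈ side G a b)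
    {p : G.Walk a l} (hp : p.IsPath) {x : V} (hx : x ∈ p.support) : x ∈ side G a b := by
  obtain ⟨q, hq⟩ := mem_side_iff_exists_walk.1 hl
  have hpq : p = q.bypass :=
    congrArg Subtype.val ((hG.subsingleton_path a l).elim ⟨p, hp⟩ ⟨q.bypass, q.bypass_isPath⟩)
  subst hpq
  exact mem_side_of_notMem_edges (fun h => hq (q.edges_bypass_subset_edges h)) hx

lemma side_subset_side (hG : G.IsAcyclic) (hbc : G.Adj b c) (hac : a ≠ c) :
    side G c b ⊆ side G b a := by
  intro l hl
  obtain ⟨p, hp⟩ := mem_side_iff_exists_walk.1 hl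
  have hb : b ∉ p.support := fun h => notMem_side hG hbc.symm (mem_side_of_notMem_edges hp h)
  refine mem_side_iff_exists_walk.2 ⟨cons hbc p, ?_⟩
  rw [edges_cons, List.mem_cons, not_or]
  exact ⟨fun h => hac (Sym2.congr_right.1 h), fun h => hb (p.fst_mem_support_of_mem_edges h)⟩

noncomputable def treePath (hG : G.IsTree) (u v : V) : G.Walk u v :=
  (hG.existsUnique_path u v).choose

lemma isPath_treePath (hG : G.IsTree) (u v : V) : (treePath hG u v).IsPath :=
  (hG.existsUnique_path u v).choose_spec.1

lemma eq_treePath (hG : G.IsTree) {u v : V} {w : G.Walk u v} (hw : w.IsPath) :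
    w = treePath hG u v :=
  (hG.existsUnique_path u v).choose_spec.2 w hw

lemma treePath_self (hG : G.IsTree) (u : V) : treePath hG u u = nil :=
  (eq_treePath hG IsPath.nil).symm

lemma treePath_eq_cons (hG : G.IsTree) (hbc : G.Adj b c) (hl : l ∈ side G c b) :
    treePath hG b l = cons hbc (treePath hG c l) := by
  have hb : b ∉ (treePath hG c l).support := fun h =>
    notMem_side hG.isAcyclic hbc.symm
      (mem_side_of_mem_support_of_isPath hG.isAcyclic hl (isPath_treePath hG c l) h)
  exact (eq_treePath hG ((isPath_treePath hG c l).cons hb)).symm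

end Tree

namespace TSSRepr

variable {F : Type*} [Field F] {V : Type*} {G : SimpleGraph V}
  {m n : V → ℕ} {ρ : V → V → ℕ} {T : Matrix ((i : V) × Fin (m i)) ((j : V) × Fin (n j)) F}
  (R : TSSRepr G m n ρ T) (hG : G.IsTree)

/-- Row `l` of the observability factor of the directed edge `(a,b)`: the product of the
generators along the path from `b` to `l`, entered through `(a,b)`. -/
noncomputable def obs (a b l : V) : Matrix (Fin (m l)) (Fin (ρ a b)) F :=
  outChain R.Out R.Trans b l (treePath hG b l) a

/-- Column `l` of the controllability factor of the directed edge `(b,c)`: the product of the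
generators along the path from `l` to `b`, left through `(b,c)`. -/
noncomputable def ctrl (b c l : V) : Matrix (Fin (ρ b c)) (Fin (n l)) F :=
  inpChain R.Inp R.Trans l b (treePath hG l b) c

variable {a b c i j l : V}

lemma obs_eq_obs_mul_trans (hbc : G.Adj b c) (hl : l ∈ side G c b) (a : V) :
    R.obs hG a b l = R.obs hG b c l * R.Trans b c a := by
  rw [obs, treePath_eq_cons hG hbc hl]
  rfl

lemma ctrl_self (b c : V) : R.ctrl hG b c b = R.Inp b c := by
  rw [ctrl, treePath_self]
  rfl

lemma blockOf_eq_outChain_mul_ctrl (hbc : G.Adj b c) {w : G.Walk c i}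
    (hp : (cons hbc w).IsPath) (hl : l ∈ side G b c) :
    blockOf T i l = outChain R.Out R.Trans c i w b * R.ctrl hG b c l := by
  obtain ⟨hw, hb⟩ := (cons_isPath_iff hbc w).1 hp
  have hu : ∀ x ∈ (treePath hG l b).support, x ∈ side G b c := fun x hx =>
    mem_side_of_mem_support_of_isPath hG.isAcyclic hl (isPath_treePath hG l b).reverse
      (by rwa [support_reverse, List.mem_reverse])
  have hdisj : ∀ x ∈ (treePath hG l b).support, x ∉ w.support := fun x hx hx' =>
    Set.disjoint_left.1 (disjoint_side hG.isAcyclic hbc) (hu x hx)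
      (mem_side_of_notMem_support hb hx')
  have hpath : ((treePath hG l b).append (cons hbc w)).IsPath := by
    rw [isPath_def, support_append, support_cons, List.tail_cons]
    exact (isPath_treePath hG l b).support_nodup.append hw.support_nodup hdisj
  have hil : i ≠ l := fun h => hdisj l (start_mem_support _) (h ▸ w.end_mem_support)
  rw [R.offdiag hil _ hpath, pathMatrix_append_cons]
  rfl

lemma blockOf_eq_obs_mul_inp (hjc : G.Adj j c) (hl : l ∈ side G c j) :
    blockOf T l j = R.obs hG j c l * R.Inp j c := by
  have hp := treePath_eq_cons hG hjc hl ▸ isPath_treePath hG j l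
  rw [R.blockOf_eq_outChain_mul_ctrl hG hjc hp (self_mem_side j c), ctrl_self]
  rfl

end TSSRepr

section Blocks

variable {R : Type*} [Semiring R] {q t r₁ r₂ s₁ s₂ : ℕ}

noncomputable def finFromCols (A : Matrix (Fin q) (Fin r₁) R) (B : Matrix (Fin q) (Fin r₂) R) :
    Matrix (Fin q) (Fin (r₁ + r₂)) R :=
  (fromCols A B).submatrix id finSumFinEquiv.symm

noncomputable def finFromRows (A : Matrix (Fin r₁) (Fin q) R) (B : Matrix (Fin r₂) (Fin q) R) :
    Matrix (Fin (r₁ + r₂)) (Fin q) R :=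
  (fromRows A B).submatrix finSumFinEquiv.symm id

noncomputable def finFromBlocks (A : Matrix (Fin r₁) (Fin s₁) R) (B : Matrix (Fin r₁) (Fin s₂) R)
    (C : Matrix (Fin r₂) (Fin s₁) R) (D : Matrix (Fin r₂) (Fin s₂) R) :
    Matrix (Fin (r₁ + r₂)) (Fin (s₁ + s₂)) R :=
  (fromBlocks A B C D).submatrix finSumFinEquiv.symm finSumFinEquiv.symm

lemma finFromCols_mul_finFromRows (A₁ : Matrix (Fin q) (Fin r₁) R)
    (A₂ : Matrix (Fin q) (Fin r₂) R) (B₁ : Matrix (Fin r₁) (Fin t) R)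
    (B₂ : Matrix (Fin r₂) (Fin t) R) :
    finFromCols A₁ A₂ * finFromRows B₁ B₂ = A₁ * B₁ + A₂ * B₂ := by
  rw [finFromCols, finFromRows, submatrix_mul_equiv, fromCols_mul_fromRows, submatrix_id_id]

lemma finFromCols_mul_finFromBlocks (A₁ : Matrix (Fin q) (Fin r₁) R)
    (A₂ : Matrix (Fin q) (Fin r₂) R) (B₁₁ : Matrix (Fin r₁) (Fin s₁) R)
    (B₁₂ : Matrix (Fin r₁) (Fin s₂) R) (B₂₁ : Matrix (Fin r₂) (Fin s₁) R)
    (B₂₂ : Matrix (Fin r₂) (Fin s₂) R) :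
    finFromCols A₁ A₂ * finFromBlocks B₁₁ B₁₂ B₂₁ B₂₂
      = finFromCols (A₁ * B₁₁ + A₂ * B₂₁) (A₁ * B₁₂ + A₂ * B₂₂) := by
  rw [finFromCols, finFromBlocks, submatrix_mul_equiv, fromCols_mul_fromBlocks, finFromCols]

end Blocks

section Product

variable {F : Type*} [Field F] {V : Type*} [Fintype V] {G : SimpleGraph V}
  {m n p : V → ℕ} {ρ₁ ρ₂ : V → V → ℕ} (hG : G.IsTree)

lemma blockOf_mul (T₁ : Matrix ((i : V) × Fin (m i)) ((j : V) × Fin (n j)) F)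
    (T₂ : Matrix ((i : V) × Fin (n i)) ((j : V) × Fin (p j)) F) (i j : V) :
    blockOf (T₁ * T₂) i j = ∑ l, blockOf T₁ i l * blockOf T₂ l j := by
  ext a b
  simp only [blockOf, mul_apply, Matrix.sum_apply]
  rw [← Finset.univ_sigma_univ, Finset.sum_sigma]

noncomputable def mulObs (T₁ : Matrix ((i : V) × Fin (m i)) ((j : V) × Fin (n j)) F)
    {T₂ : Matrix ((i : V) × Fin (n i)) ((j : V) × Fin (p j)) F} (R₂ : TSSRepr G n p ρ₂ T₂)
    (i a b : V) : Matrix (Fin (m i)) (Fin (ρ₂ a b)) F :=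
  ∑ l with l ∈ side G b a, blockOf T₁ i l * R₂.obs hG a b l

noncomputable def ctrlMul {T₁ : Matrix ((i : V) × Fin (m i)) ((j : V) × Fin (n j)) F}
    (R₁ : TSSRepr G m n ρ₁ T₁) (T₂ : Matrix ((i : V) × Fin (n i)) ((j : V) × Fin (p j)) F)
    (k c : V) : Matrix (Fin (ρ₁ k c)) (Fin (p k)) F :=
  ∑ l with l ∈ side G k c, R₁.ctrl hG k c l * blockOf T₂ l k

variable {T₁ : Matrix ((i : V) × Fin (m i)) ((j : V) × Fin (n j)) F}
  {T₂ : Matrix ((i : V) × Fin (n i)) ((j : V) × Fin (p j)) F}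
  (R₁ : TSSRepr G m n ρ₁ T₁) (R₂ : TSSRepr G n p ρ₂ T₂)

noncomputable def ctrlObs (b c a : V) : Matrix (Fin (ρ₁ b c)) (Fin (ρ₂ a b)) F :=
  ∑ l with l ∈ side G b a ∧ l ∈ side G b c, R₁.ctrl hG b c l * R₂.obs hG a b l

noncomputable def mulOut (k i : V) : Matrix (Fin (m k)) (Fin (ρ₁ i k + ρ₂ i k)) F :=
  finFromCols (R₁.Out k i) (mulObs hG T₁ R₂ k i k)

noncomputable def mulInp (k j : V) : Matrix (Fin (ρ₁ k j + ρ₂ k j)) (Fin (p k)) F :=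
  finFromRows (ctrlMul hG R₁ T₂ k j) (R₂.Inp k j)

noncomputable def mulTrans (k i j : V) :
    Matrix (Fin (ρ₁ k i + ρ₂ k i)) (Fin (ρ₁ j k + ρ₂ j k)) F :=
  finFromBlocks (R₁.Trans k i j) (ctrlObs hG R₁ R₂ k i j) 0 (R₂.Trans k i j)

lemma mulObs_eq_add {a b c i : V} (hbc : G.Adj b c) (hac : a ≠ c)
    {w : G.Walk c i} (hp : (cons hbc w).IsPath) :
    mulObs hG T₁ R₂ i a b
      = outChain R₁.Out R₁.Trans c i w b * ctrlObs hG R₁ R₂ b c a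
        + mulObs hG T₁ R₂ i b c * R₂.Trans b c a := by
  have hside : ∀ l, l ∈ side G b a ∧ l ∈ side G c b ↔ l ∈ side G c b := fun l =>
    ⟨And.right, fun hl => ⟨side_subset_side hG.isAcyclic hbc hac hl, hl⟩⟩
  rw [mulObs, ← sum_filter_side_add_sum_filter_side hG hbc, Finset.filter_filter,
    Finset.filter_filter, Finset.filter_congr fun l _ => hside l, ctrlObs, Matrix.mul_sum,
    mulObs, Matrix.sum_mul]
  congr 1 <;> refine Finset.sum_congr rfl fun l hl => ?_ <;>
    obtain ⟨-, hl⟩ := Finset.mem_filter.1 hl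
  · rw [R₁.blockOf_eq_outChain_mul_ctrl hG hbc hp hl.2, Matrix.mul_assoc]
  · rw [R₂.obs_eq_obs_mul_trans hG hbc hl, Matrix.mul_assoc]

lemma outChain_mulOut_mulTrans {b i : V} (w : G.Walk b i) {a : V} (hab : G.Adj a b)
    (hp : (cons hab w).IsPath) :
    outChain (mulOut hG R₁ R₂) (mulTrans hG R₁ R₂) b i w a
      = finFromCols (outChain R₁.Out R₁.Trans b i w a) (mulObs hG T₁ R₂ i a b) := by
  induction w generalizing a with
  | nil => rfl
  | @cons b c i hbc w ih =>
    have hp' : (cons hbc w).IsPath := ((cons_isPath_iff _ _).1 hp).1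
    have hac : a ≠ c := by
      rintro rfl
      exact ((cons_isPath_iff _ _).1 hp).2 (by simp)
    simp only [outChain]
    rw [ih hbc hp', mulTrans, finFromCols_mul_finFromBlocks, Matrix.mul_zero, add_zero,
      mulObs_eq_add hG R₁ R₂ hbc hac hp']

lemma blockOf_mul_eq_pathMatrix {i j : V} (hij : i ≠ j) (w : G.Walk j i) (hw : w.IsPath) :
    blockOf (T₁ * T₂) i j
      = pathMatrix (mulInp hG R₁ R₂) (mulTrans hG R₁ R₂) (mulOut hG R₁ R₂) j i w := by
  cases w with
  | nil => exact absurd rfl hij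
  | @cons _ c _ hjc w =>
    rw [pathMatrix, outChain_mulOut_mulTrans hG R₁ R₂ w hjc hw, mulInp,
      finFromCols_mul_finFromRows, blockOf_mul, ← sum_filter_side_add_sum_filter_side hG hjc,
      ctrlMul, Matrix.mul_sum, mulObs, Matrix.sum_mul]
    congr 1 <;> refine Finset.sum_congr rfl fun l hl => ?_ <;>
      obtain ⟨-, hl⟩ := Finset.mem_filter.1 hl
    · rw [R₁.blockOf_eq_outChain_mul_ctrl hG hjc hw hl, Matrix.mul_assoc]
    · rw [R₂.blockOf_eq_obs_mul_inp hG hjc hl, Matrix.mul_assoc]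

noncomputable def TSSRepr.mul : TSSRepr G m p (fun i j => ρ₁ i j + ρ₂ i j) (T₁ * T₂) where
  D k := blockOf (T₁ * T₂) k k
  Inp := mulInp hG R₁ R₂
  Trans := mulTrans hG R₁ R₂
  Out := mulOut hG R₁ R₂
  diag _ := rfl
  offdiag := blockOf_mul_eq_pathMatrix hG R₁ R₂

end Product

theorem tss_mul_general {F : Type*} [Field F] {V : Type*} [Fintype V]
    (G : SimpleGraph V) (hG : G.IsTree) (m n p : V → ℕ) (ρ₁ ρ₂ : V → V → ℕ)
    (T₁ : Matrix ((i : V) × Fin (m i)) ((j : V) × Fin (n j)) F)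
    (T₂ : Matrix ((i : V) × Fin (n i)) ((j : V) × Fin (p j)) F)
    (h₁ : Nonempty (TSSRepr G m n ρ₁ T₁)) (h₂ : Nonempty (TSSRepr G n p ρ₂ T₂)) :
    Nonempty (TSSRepr G m p (fun i j => ρ₁ i j + ρ₂ i j) (T₁ * T₂)) :=
  let ⟨R₁⟩ := h₁
  let ⟨R₂⟩ := h₂
  ⟨R₁.mul hG R₂⟩

/-- TSS product: if `T₁ ∈ F^{M×N}` and `T₂ ∈ F^{N×P}` are TSS matrices on
the same tree `G` with rank profiles `ρ₁, ρ₂` (the column partition of `T₁` agreeing with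
the row partition of `T₂`), then `T₁T₂` admits a TSS representation on `G` with rank
profile `e ↦ ρ₁(e) + ρ₂(e)`. -/
theorem tss_mul {F : Type*} [Field F] {V : Type*} [Fintype V] [DecidableEq V]
    (G : SimpleGraph V) (hG : G.IsTree) (m n p : V → ℕ) (ρ₁ ρ₂ : V → V → ℕ)
    (T₁ : Matrix ((i : V) × Fin (m i)) ((j : V) × Fin (n j)) F)
    (T₂ : Matrix ((i : V) × Fin (n i)) ((j : V) × Fin (p j)) F)
    (h₁ : Nonempty (TSSRepr G m n ρ₁ T₁)) (h₂ : Nonempty (TSSRepr G n p ρ₂ T₂)) :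
    Nonempty (TSSRepr G m p (fun i j => ρ₁ i j + ρ₂ i j) (T₁ * T₂)) :=
  tss_mul_general G hG m n p ρ₁ ρ₂ T₁ T₂ h₁ h₂

end TSS
end

section
/- Let (T,G) be a graph-partitioned matrix with G = (V,E) a finite connected acyclic undirected graph, and let c > 0. Then (T,G) satisfies the GIRS property with constant c, i.e., rank T⟨Ā,A⟩ ≤ c · E(A) for all A ⊆ V, if and only if every unit Hankel block of T has rank at most c, i.e., rank H_e ≤ c for every directed edge e of G. -/
/-! If `A` is the side of an edge `(i, j)`, its only border edge is `(i, j)`, so `T⟨Ā, A⟩` is the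
unit Hankel block of that edge. Conversely, splitting the columns of `T⟨Ā, A⟩` along a
connected component `A₀` of `A` and the rest `A \ A₀` adds ranks and border-edge counts, so by
induction it suffices to treat a connected `A₀`. In a tree, every vertex outside `A₀` lies on the
far side `side G y x` of some border edge `(x, y)` of `A₀`, while `A₀` lies in `side G x y`, and
the two sides are disjoint; so the rows of `T⟨Ā₀, A₀⟩` are covered by submatrices of the unit
Hankel blocks of the border edges of `A₀`. -/

open Matrix

attribute [local instance] Classical.propDecidable

namespace TSS

variable {F : Type*} [Field F] {V : Type*} [Fintype V] [DecidableEq V]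

section MatrixRank

variable {K : Type*} [Field K] {m n : Type*} [Fintype n]

theorem _root_.Matrix.rank_le_sum_rank_of_range_row_subset [Finite m] {ι : Type*} [Fintype ι]
    {mᵢ : ι → Type*} [∀ i, Finite (mᵢ i)] (A : Matrix m n K) (B : ∀ i, Matrix (mᵢ i) n K)
    (h : Set.range A.row ⊆ ⋃ i, Set.range (B i).row) :
    A.rank ≤ ∑ i, (B i).rank := by
  simp only [Matrix.rank_eq_finrank_span_row]
  calc Module.finrank K ↥(Submodule.span K (Set.range A.row))
      ≤ Module.finrank K ↥(⨆ i, Submodule.span K (Set.range (B i).row)) := by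
        rw [← Submodule.span_iUnion]
        exact Submodule.finrank_mono (Submodule.span_mono h)
    _ ≤ ∑ i, Module.finrank K ↥(Submodule.span K (Set.range (B i).row)) := by
        rw [← Finset.sup_univ_eq_iSup]
        exact Finset.apply_sup_le_sum (f := fun W : Submodule K (n → K) => Module.finrank K W)
          (finrank_bot K _) (Submodule.finrank_add_le_finrank_add_finrank _ _) _

theorem _root_.Matrix.rank_le_add_rank_of_range_col_subset [Finite m] {n₁ n₂ : Type*} [Fintype n₁]
    [Fintype n₂] (A : Matrix m n K) (B₁ : Matrix m n₁ K) (B₂ : Matrix m n₂ K)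
    (h : Set.range A.col ⊆ Set.range B₁.col ∪ Set.range B₂.col) :
    A.rank ≤ B₁.rank + B₂.rank := by
  simp only [Matrix.rank_eq_finrank_span_cols]
  calc Module.finrank K ↥(Submodule.span K (Set.range A.col))
      ≤ Module.finrank K ↥(Submodule.span K (Set.range B₁.col) ⊔
          Submodule.span K (Set.range B₂.col)) := by
        rw [← Submodule.span_union]
        exact Submodule.finrank_mono (Submodule.span_mono h)
    _ ≤ _ := Submodule.finrank_add_le_finrank_add_finrank _ _

end MatrixRank

open SimpleGraph

section Graph

variable {V : Type*} {G : SimpleGraph V}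

variable (G) in
def borderEdges (A : Set V) : Set (V × V) := {e | e.1 ∈ A ∧ e.2 ∉ A ∧ G.Adj e.1 e.2}

lemma edgeCount_eq_ncard (A : Set V) : edgeCount G A = (borderEdges G A).ncard := rfl

lemma mem_side_self (i j : V) : i ∈ side G i j := Reachable.refl i

lemma mem_side_of_adj {i j x y : V} (hx : x ∈ side G i j) (h : G.Adj x y)
    (hne : s(x, y) ≠ s(i, j)) : y ∈ side G i j :=
  Reachable.trans hx (Adj.reachable (deleteEdges_adj.mpr ⟨h, by simpa using hne⟩))

lemma notMem_side_s8 (hG : G.IsAcyclic) {i j : V} (h : G.Adj i j) : j ∉ side G i j :=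
  isBridge_iff.mp (isAcyclic_iff_forall_isBridge.mp hG h)

lemma disjoint_side_s8 (hG : G.IsAcyclic) {i j : V} (h : G.Adj i j) :
    Disjoint (side G i j) (side G j i) := by
  refine Set.disjoint_left.mpr fun w hi hj => notMem_side_s8 hG h ?_
  have hj' : (G.deleteEdges {s(i, j)}).Reachable j w := by rwa [Sym2.eq_swap]
  exact Reachable.trans hi hj'.symm

lemma edgeCount_side (hG : G.IsAcyclic) {i j : V} (h : G.Adj i j) :
    edgeCount G (side G i j) = 1 := by
  rw [edgeCount_eq_ncard, Set.ncard_eq_one]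
  refine ⟨(i, j), Set.ext fun ⟨x, y⟩ => ⟨fun ⟨hx, hy, hxy⟩ => ?_, ?_⟩⟩
  · by_cases he : s(x, y) = s(i, j)
    · rcases Sym2.eq_iff.mp he with ⟨rfl, rfl⟩ | ⟨rfl, rfl⟩
      · rfl
      · exact absurd hx (notMem_side_s8 hG h)
    · exact absurd (mem_side_of_adj hx hxy he) hy
  · rintro ⟨⟩
    exact ⟨mem_side_self i j, notMem_side_s8 hG h, h⟩

lemma exists_mem_borderEdges_mem_side (hG : G.Preconnected) {S : Set V} {b q : V}
    (hb : b ∈ S) (hq : q ∉ S) : ∃ e ∈ borderEdges G S, q ∈ side G e.2 e.1 := by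
  obtain ⟨p⟩ := hG q b
  induction p with
  | nil => exact absurd hb hq
  | @cons q z b h p ih =>
    by_cases hz : z ∈ S
    · exact ⟨(z, q), ⟨hz, hq, h.symm⟩, mem_side_self q z⟩
    · obtain ⟨e, he, hzside⟩ := ih hb hz
      refine ⟨e, he, mem_side_of_adj hzside h.symm fun heq => ?_⟩
      rcases Sym2.eq_iff.mp heq with ⟨-, hqe⟩ | ⟨hze, -⟩
      · exact hq (hqe ▸ he.1)
      · exact hz (hze ▸ he.1)

variable (G) in
def component (A : Set V) (a : V) : Set V := {w | ∃ p : G.Walk a w, ∀ v ∈ p.support, v ∈ A}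

lemma component_subset (A : Set V) (a : V) : component G A a ⊆ A :=
  fun _ ⟨p, hp⟩ => hp _ p.end_mem_support

lemma mem_component_self {A : Set V} {a : V} (ha : a ∈ A) : a ∈ component G A a :=
  ⟨.nil, by simpa using ha⟩

lemma mem_component_of_adj {A : Set V} {a u v : V} (hu : u ∈ component G A a) (hv : v ∈ A)
    (h : G.Adj u v) : v ∈ component G A a := by
  obtain ⟨p, hp⟩ := hu
  refine ⟨p.concat h, fun w hw => ?_⟩
  rw [Walk.support_concat, List.mem_append, List.mem_singleton] at hw
  exact hw.elim (hp w) fun hw => hw ▸ hv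

lemma component_subset_side {A : Set V} {a u v : V} (hu : u ∈ component G A a) (hv : v ∉ A) :
    component G A a ⊆ side G u v := by
  obtain ⟨p, hp⟩ := hu
  rintro w ⟨q, hq⟩
  have hsupp : ∀ x ∈ (p.reverse.append q).support, x ∈ A := by
    simp only [Walk.mem_support_append_iff, Walk.support_reverse, List.mem_reverse]
    exact fun x hx => hx.elim (hp x) (hq x)
  refine (Walk.toDeleteEdge _ (p.reverse.append q) fun he => hv ?_).reachable
  exact hsupp v (Walk.snd_mem_support_of_mem_edges _ he)

lemma edgeCount_add_edgeCount_diff_le [Finite V] {A B : Set V} (hBA : B ⊆ A)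
    (hB : ∀ u v, u ∈ B → v ∈ A → G.Adj u v → v ∈ B) :
    edgeCount G B + edgeCount G (A \ B) ≤ edgeCount G A := by
  simp only [edgeCount_eq_ncard]
  rw [← Set.ncard_union_eq]
  · refine Set.ncard_le_ncard ?_
    rintro ⟨x, y⟩ (⟨hx, hy, h⟩ | ⟨⟨hxA, hxB⟩, hy, h⟩)
    · exact ⟨hBA hx, fun hyA => hy (hB x y hx hyA h), h⟩
    · exact ⟨hxA, fun hyA => hy ⟨hyA, fun hyB => hxB (hB y x hyB hxA h.symm)⟩, h⟩
  · exact Set.disjoint_left.mpr fun e he he' => he'.1.2 he.1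

lemma edgeCount_component_add_le [Finite V] {A : Set V} (a : V) :
    edgeCount G (component G A a) + edgeCount G (A \ component G A a) ≤ edgeCount G A :=
  edgeCount_add_edgeCount_diff_le (component_subset A a)
    fun _ _ hu hv h => mem_component_of_adj hu hv h

end Graph

section Rank

variable {F : Type*} [Field F] {V : Type*} [Fintype V] {m n : V → ℕ}
  (T : Matrix ((i : V) × Fin (m i)) ((j : V) × Fin (n j)) F)

lemma rank_subBlock_mono {R R' C C' : Set V} (hR : R ⊆ R') (hC : C ⊆ C') :
    (subBlock T R C).rank ≤ (subBlock T R' C').rank :=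
  Matrix.rank_submatrix_le (m₀ := {p : (i : V) × Fin (m i) // p.1 ∈ R})
    (n₀ := {q : (j : V) × Fin (n j) // q.1 ∈ C}) (subBlock T R' C')
    (fun p => ⟨p.1, hR p.2⟩) (fun q => ⟨q.1, hC q.2⟩)

lemma rank_subBlock_le_sum_of_subset_iUnion {ι : Type*} [Fintype ι] {R C : Set V}
    (Rᵢ : ι → Set V) (hR : R ⊆ ⋃ i, Rᵢ i) :
    (subBlock T R C).rank ≤ ∑ i, (subBlock T (Rᵢ i) C).rank := by
  refine Matrix.rank_le_sum_rank_of_range_row_subset _ _ ?_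
  rintro _ ⟨p, rfl⟩
  obtain ⟨i, hi⟩ := Set.mem_iUnion.mp (hR p.2)
  exact Set.mem_iUnion.mpr ⟨i, ⟨p.1, hi⟩, rfl⟩

lemma rank_subBlock_le_add_of_subset_union {R C : Set V} (C₁ C₂ : Set V) (hC : C ⊆ C₁ ∪ C₂) :
    (subBlock T R C).rank ≤ (subBlock T R C₁).rank + (subBlock T R C₂).rank := by
  refine Matrix.rank_le_add_rank_of_range_col_subset _ _ _ ?_
  rintro _ ⟨q, rfl⟩
  rcases hC q.2 with h | h
  exacts [Or.inl ⟨⟨q.1, h⟩, rfl⟩, Or.inr ⟨⟨q.1, h⟩, rfl⟩]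

lemma rank_hankelBlock_eq_zero {A : Set V} (hA : A = ∅) : (hankelBlock T A).rank = 0 := by
  have : IsEmpty {q : (j : V) × Fin (n j) // q.1 ∈ A} := ⟨fun q => by simpa [hA] using q.2⟩
  exact Nat.le_zero.mp ((Matrix.rank_le_card_width _).trans_eq Fintype.card_eq_zero)

end Rank

section Bound

variable {F : Type*} [Field F] {V : Type*} [Fintype V] {G : SimpleGraph V} {m n : V → ℕ}
  {T : Matrix ((i : V) × Fin (m i)) ((j : V) × Fin (n j)) F} {c : ℕ}

lemma rank_hankelBlock_le_of_subset_side (hG : G.IsTree)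
    (hH : ∀ i j, G.Adj i j → (unitHankel G T i j).rank ≤ c) {B : Set V} (hB : B.Nonempty)
    (hside : ∀ e ∈ borderEdges G B, B ⊆ side G e.1 e.2) :
    (hankelBlock T B).rank ≤ c * edgeCount G B := by
  obtain ⟨b, hb⟩ := hB
  have hcover : Bᶜ ⊆ ⋃ e : borderEdges G B, side G e.1.2 e.1.1 := fun q hq => by
    obtain ⟨e, he, hqe⟩ := exists_mem_borderEdges_mem_side hG.1.preconnected hb hq
    exact Set.mem_iUnion.mpr ⟨⟨e, he⟩, hqe⟩
  have hunit (e : borderEdges G B) : (subBlock T (side G e.1.2 e.1.1) B).rank ≤ c :=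
    (rank_subBlock_mono T (disjoint_side_s8 hG.2 e.2.2.2).subset_compl_left (hside e e.2)).trans
      (hH _ _ e.2.2.2)
  calc (hankelBlock T B).rank
      ≤ ∑ e : borderEdges G B, (subBlock T (side G e.1.2 e.1.1) B).rank :=
        rank_subBlock_le_sum_of_subset_iUnion T _ hcover
    _ ≤ ∑ _e : borderEdges G B, c := Finset.sum_le_sum fun e _ => hunit e
    _ = c * edgeCount G B := by
        rw [Finset.sum_const, Finset.card_univ, smul_eq_mul, mul_comm, ← Nat.card_eq_fintype_card]
        rfl

lemma rank_hankelBlock_le_of_unitHankel (hG : G.IsTree)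
    (hH : ∀ i j, G.Adj i j → (unitHankel G T i j).rank ≤ c) (A : Set V) :
    (hankelBlock T A).rank ≤ c * edgeCount G A := by
  induction A using WellFoundedLT.induction with
  | _ A ih =>
  rcases A.eq_empty_or_nonempty with hA | ⟨a, ha⟩
  · rw [rank_hankelBlock_eq_zero T hA]
    exact Nat.zero_le _
  set A₀ := component G A a
  have hA₀A : A₀ ⊆ A := component_subset A a
  -- naming `A \ A₀` keeps its column `Fintype` instance the generic one of `ih`, not the one
  -- that instance search builds from `Set.decidableSdiff`
  obtain ⟨A₁, hA₁⟩ : ∃ A₁, A \ A₀ = A₁ := ⟨_, rfl⟩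
  have h₀ : (hankelBlock T A₀).rank ≤ c * edgeCount G A₀ :=
    rank_hankelBlock_le_of_subset_side hG hH ⟨a, mem_component_self ha⟩ fun e he =>
      component_subset_side he.1 fun hA => he.2.1 (mem_component_of_adj he.1 hA he.2.2)
  have h₁ : (hankelBlock T A₁).rank ≤ c * edgeCount G A₁ :=
    ih A₁ (hA₁ ▸ Set.sdiff_ssubset_left_iff.mpr ⟨a, ha, mem_component_self ha⟩)
  have hA₁A : A₁ ⊆ A := hA₁ ▸ Set.sdiff_subset
  calc (hankelBlock T A).rank ≤ (subBlock T Aᶜ A₀).rank + (subBlock T Aᶜ A₁).rank :=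
        rank_subBlock_le_add_of_subset_union T _ _ (by rw [← hA₁, Set.union_sdiff_cancel hA₀A])
    _ ≤ (hankelBlock T A₀).rank + (hankelBlock T A₁).rank :=
        add_le_add (rank_subBlock_mono T (Set.compl_subset_compl.mpr hA₀A) subset_rfl)
          (rank_subBlock_mono T (Set.compl_subset_compl.mpr hA₁A) subset_rfl)
    _ ≤ c * (edgeCount G A₀ + edgeCount G A₁) := by rw [mul_add]; exact add_le_add h₀ h₁
    _ ≤ c * edgeCount G A := by
        rw [← hA₁]
        exact Nat.mul_le_mul_left c (edgeCount_component_add_le a)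

end Bound

theorem girs_iff_unit_hankel_general {F : Type*} [Field F] {V : Type*} [Fintype V]
    (G : SimpleGraph V) (hG : G.IsTree) (m n : V → ℕ) (c : ℕ)
    (T : Matrix ((i : V) × Fin (m i)) ((j : V) × Fin (n j)) F) :
    (∀ A : Set V, (hankelBlock T A).rank ≤ c * edgeCount G A) ↔
      ∀ i j : V, G.Adj i j → (unitHankel G T i j).rank ≤ c := by
  refine ⟨fun h i j hij => ?_, fun hH => rank_hankelBlock_le_of_unitHankel hG hH⟩
  have h := h (side G i j)
  rwa [edgeCount_side hG.2 hij, mul_one] at h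

/-- `(T,G)` (with `G` a tree) satisfies the GIRS property with constant
`c > 0` if and only if every unit Hankel block of `T` has rank at most `c`. -/
theorem girs_iff_unit_hankel {F : Type*} [Field F] {V : Type*} [Fintype V] [DecidableEq V]
    (G : SimpleGraph V) (hG : G.IsTree) (m n : V → ℕ) (c : ℕ) (hc : 0 < c)
    (T : Matrix ((i : V) × Fin (m i)) ((j : V) × Fin (n j)) F) :
    (∀ A : Set V, (hankelBlock T A).rank ≤ c * edgeCount G A) ↔
      ∀ i j : V, G.Adj i j → (unitHankel G T i j).rank ≤ c :=
  girs_iff_unit_hankel_general G hG m n c T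

end TSS
end
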